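/- If Q ∈ ℝ^{3×3} satisfies the elliptic system L̃(Q) = F where F is symmetric and traceless, then Q − Qᵀ and tr Q are harmonic in Ω; in the algebraic (symbol) form: for the principal symbol σ(ξ) of L̃ applied to any matrix Q, one has σ(ξ)(Q) − σ(ξ)(Q)ᵀ = L₁|ξ|²(Q − Qᵀ) and tr(σ(ξ)(Q)) = L₁|ξ|² tr Q, so in particular if σ(ξ)(Q) is symmetric and traceless with |ξ| ≠ 0 then Q is symmetric and traceless. -/
import Mathlib


open Matrix BigOperators Finset


noncomputable def sigmaSym (L1 L2 L3 : ℝ) (x : Fin 3 → ℝ)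
    (Q : Matrix (Fin 3) (Fin 3) ℝ) : Matrix (Fin 3) (Fin 3) ℝ :=
  Matrix.of fun i j =>
    L1 * (∑ k, x k ^ 2) * Q i j
    - (1/4) * (L2 + L3) *
        (x i * (∑ k, x k * Q j k) + x j * (∑ k, x k * Q i k)
         + x i * (∑ k, x k * Q k j) + x j * (∑ k, x k * Q k i)
         - (4/3) * x i * x j * Matrix.trace Q
         - (4/3) * (if i = j then (1 : ℝ) else 0) * (∑ k, ∑ l, x k * x l * Q k l)
         + (4/9) * (if i = j then (1 : ℝ) else 0) * (∑ k, x k ^ 2) * Matrix.trace Q)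

theorem stmt10 (L1 L2 L3 : ℝ) (hL1 : 0 < L1) (x : Fin 3 → ℝ)
    (Q : Matrix (Fin 3) (Fin 3) ℝ) :
    sigmaSym L1 L2 L3 x Q - (sigmaSym L1 L2 L3 x Q)ᵀ
        = (L1 * ∑ k, x k ^ 2) • (Q - Qᵀ)
    ∧ Matrix.trace (sigmaSym L1 L2 L3 x Q) = L1 * (∑ k, x k ^ 2) * Matrix.trace Q
    ∧ ((sigmaSym L1 L2 L3 x Q)ᵀ = sigmaSym L1 L2 L3 x Q →
        Matrix.trace (sigmaSym L1 L2 L3 x Q) = 0 → x ≠ 0 →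
        Qᵀ = Q ∧ Matrix.trace Q = 0) := by
  have h1 : sigmaSym L1 L2 L3 x Q - (sigmaSym L1 L2 L3 x Q)ᵀ
      = (L1 * ∑ k, x k ^ 2) • (Q - Qᵀ) := by
    ext i j
    simp only [sigmaSym, Matrix.sub_apply, Matrix.transpose_apply, Matrix.smul_apply,
      Matrix.of_apply, smul_eq_mul, eq_comm (a := i)]
    ring
  have h2 : Matrix.trace (sigmaSym L1 L2 L3 x Q)
      = L1 * (∑ k, x k ^ 2) * Matrix.trace Q := by
    simp only [Matrix.trace, Matrix.diag, sigmaSym, Matrix.of_apply, eq_self_iff_true, if_true,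
      Fin.sum_univ_three]
    ring
  refine ⟨h1, h2, fun hsym htr hx => ?_⟩
  have hs : (0:ℝ) < ∑ k, x k ^ 2 := by
    obtain ⟨k, hk⟩ := Function.ne_iff.mp hx
    exact Finset.sum_pos' (fun i _ => sq_nonneg _)
      ⟨k, Finset.mem_univ k, by simp only [Pi.zero_apply] at hk; positivity⟩
  have hc : L1 * ∑ k, x k ^ 2 ≠ 0 := ne_of_gt (mul_pos hL1 hs)
  constructor
  · have : (L1 * ∑ k, x k ^ 2) • (Q - Qᵀ) = 0 := by
      rw [← h1, hsym, sub_self]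
    have h0 : Q - Qᵀ = 0 := by
      have := smul_eq_zero.mp this
      tauto
    have := sub_eq_zero.mp h0
    exact this.symm
  · have := htr ▸ h2
    have : L1 * (∑ k, x k ^ 2) * Matrix.trace Q = 0 := by rw [← h2, htr]
    exact (mul_eq_zero.mp this).resolve_left hc
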